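/- arXiv:2004.03926 — 6 statements merged into one kernel-verified Lean document; each statement's English description precedes it below -/
import Mathlib

section
/- Let G : ℝ → ℝ be continuously differentiable with G'(r)/r monotonically decreasing on r > 0. Then for all r ≥ 0 and r₀ > 0, G(r) ≤ G'(r₀)·r²/(2r₀) + (G(r₀) − (r₀/2)·G'(r₀)), with equality when r = r₀. -/
open Set

/-
Subtract from `G` the parabola `c r² / 2` with `c = G'(r₀)/r₀`. The derivative of the difference
is `r (G'(r)/r - c)`, which is `≥ 0` on `(0, r₀)` and `≤ 0` on `(r₀, ∞)` because `G'(r)/r` is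
non-increasing. Hence the difference is maximal at `r₀` on `[0, ∞)`, which is the claimed
majorization after rearranging.
-/

theorem deriv_sub_mul_sq_div_two {G : ℝ → ℝ} {x : ℝ} (hG : DifferentiableAt ℝ G x) (c : ℝ) :
    deriv (fun r => G r - c * r ^ 2 / 2) x = deriv G x - c * x := by
  have hq : HasDerivAt (fun r : ℝ => c * r ^ 2 / 2) (c * x) x := by
    refine (((hasDerivAt_pow 2 x).const_mul c).div_const 2).congr_deriv ?_
    ring
  exact (hG.hasDerivAt.sub hq).deriv

theorem isMaxOn_sub_mul_sq_div_two_of_antitoneOn_deriv_div {G : ℝ → ℝ}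
    (hG : Differentiable ℝ G) (hmono : AntitoneOn (fun r => deriv G r / r) (Ioi 0))
    {r₀ : ℝ} (hr₀ : 0 < r₀) :
    IsMaxOn (fun r => G r - deriv G r₀ / r₀ * r ^ 2 / 2) (Ici 0) r₀ := by
  set c := deriv G r₀ / r₀
  have hH : Differentiable ℝ fun r => G r - c * r ^ 2 / 2 := by fun_prop
  refine isMaxOn_Ici_of_deriv hH.continuous.continuousAt hH.continuous.continuousAt
    hH.differentiableOn hH.differentiableOn (fun x hx => ?_) (fun x hx => ?_)
  · have hx₀ : 0 < x := hx.1
    have hc : c ≤ deriv G x / x := hmono hx₀ hr₀ hx.2.le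
    rw [deriv_sub_mul_sq_div_two (hG x), sub_nonneg]
    exact (le_div_iff₀ hx₀).mp hc
  · have hx₀ : 0 < x := hr₀.trans hx
    have hc : deriv G x / x ≤ c := hmono hr₀ hx₀ hx.le
    rw [deriv_sub_mul_sq_div_two (hG x), sub_nonpos]
    exact (div_le_iff₀ hx₀).mp hc

/-- Super-Gaussian majorization inequality (Lemma 1):
if `G` is continuously differentiable and `r ↦ G'(r)/r` is monotonically
decreasing on `r > 0`, then for all `r ≥ 0` and `r₀ > 0`,
`G(r) ≤ G'(r₀) r²/(2 r₀) + (G(r₀) − (r₀/2) G'(r₀))`, with equality at `r = r₀`. -/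
theorem supergauss_majorization
    (G : ℝ → ℝ) (hG : ContDiff ℝ 1 G)
    (hmono : AntitoneOn (fun r => deriv G r / r) (Set.Ioi (0 : ℝ))) :
    (∀ r r₀ : ℝ, 0 ≤ r → 0 < r₀ →
      G r ≤ deriv G r₀ * r ^ 2 / (2 * r₀) + (G r₀ - r₀ / 2 * deriv G r₀)) ∧
    (∀ r₀ : ℝ, 0 < r₀ →
      G r₀ = deriv G r₀ * r₀ ^ 2 / (2 * r₀) + (G r₀ - r₀ / 2 * deriv G r₀)) := by
  refine ⟨fun r r₀ hr hr₀ => ?_, fun r₀ hr₀ => ?_⟩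
  · have hmax : G r - deriv G r₀ / r₀ * r ^ 2 / 2 ≤ G r₀ - deriv G r₀ / r₀ * r₀ ^ 2 / 2 :=
      isMaxOn_sub_mul_sq_div_two_of_antitoneOn_deriv_div (hG.differentiable one_ne_zero)
        hmono hr₀ (mem_Ici.mpr hr)
    have hquad : deriv G r₀ / r₀ * r ^ 2 / 2 = deriv G r₀ * r ^ 2 / (2 * r₀) := by ring
    have hvertex : deriv G r₀ / r₀ * r₀ ^ 2 / 2 = r₀ / 2 * deriv G r₀ := by
      field_simp
    linarith
  · field_simp
    ring
end

section
/- In the setting of the single sub-demixing matrix update, the value of the surrogate cost tr(W̄ᴴ V_ℓ W̄ B_ℓ⁻¹) − 2 log|det W| at W̄_ℓ = X Q⁻¹ R B_ℓ^{1/2} does not depend on the choice of the unitary matrix R, nor on the choice of the full-column-rank matrix X satisfying the null-space condition Xᴴ V_ℓ [W̄_1 ⋯ W̄_{ℓ−1} W̄_{ℓ+1} ⋯ W̄_L] = 0. -/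
open Matrix ComplexOrder

/-!
Whitening gives `W̄ᴴ V W̄ = Bhᴴ Bh` for every admissible `X`, `Q`, `R`, so the trace term is
the same on both sides. For the determinant, the null-space condition makes
`[X Wt]ᴴ V [X Wt]` block diagonal, so `|det [X Wt]|² det V = |det Q|² det (Wtᴴ V Wt)`: the ratio
`|det [X Wt]| / |det Q|` depends only on `V` and `Wt`, and `|det R| = 1`.
-/

namespace Matrix

variable {m n o : Type*}

theorem norm_det_eq_one_of_conjTranspose_mul_self_eq_one [Fintype n] [DecidableEq n]
    {R : Matrix n n ℂ} (hR : Rᴴ * R = 1) : ‖R.det‖ = 1 :=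
  CStarRing.norm_of_mem_unitary (det_of_mem_unitary (mem_unitaryGroup_iff'.mpr hR))

theorem conjTranspose_mul_mul_self_of_whitening [Fintype m] [Fintype n] [DecidableEq n]
    {V : Matrix m m ℂ} {X : Matrix m n ℂ} {Q : Matrix n n ℂ} (hQ : IsUnit Q)
    (hQfac : Xᴴ * V * X = Qᴴ * Q) {R : Matrix n n ℂ} (hR : Rᴴ * R = 1) (Bh : Matrix n n ℂ) :
    (X * Q⁻¹ * R * Bh)ᴴ * V * (X * Q⁻¹ * R * Bh) = Bhᴴ * Bh := by
  have hQd : IsUnit Q.det := (isUnit_iff_isUnit_det Q).mp hQ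
  have hQHd : IsUnit Qᴴ.det := by rw [det_conjTranspose]; exact hQd.star
  have hwhite : Qᴴ⁻¹ * (Xᴴ * V * X) * Q⁻¹ = 1 := by
    rw [hQfac, ← Matrix.mul_assoc, nonsing_inv_mul _ hQHd, Matrix.one_mul, mul_nonsing_inv _ hQd]
  calc (X * Q⁻¹ * R * Bh)ᴴ * V * (X * Q⁻¹ * R * Bh)
      = Bhᴴ * Rᴴ * (Qᴴ⁻¹ * (Xᴴ * V * X) * Q⁻¹) * R * Bh := by
        simp only [conjTranspose_mul, conjTranspose_nonsing_inv, Matrix.mul_assoc]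
    _ = Bhᴴ * Bh := by rw [hwhite, Matrix.mul_one, Matrix.mul_assoc Bhᴴ, hR, Matrix.mul_one]

theorem det_fromCols_mul {R : Type*} [CommRing R] [Fintype n] [Fintype o] [DecidableEq n]
    [DecidableEq o] (X : Matrix (n ⊕ o) n R) (C : Matrix n n R) (Y : Matrix (n ⊕ o) o R) :
    (fromCols (X * C) Y).det = (fromCols X Y).det * C.det := by
  have h : fromCols (X * C) Y = fromCols X Y * fromBlocks C 0 0 1 := by
    simp [fromCols_mul_fromBlocks]
  rw [h, det_mul, det_fromBlocks_zero₂₁, det_one, mul_one]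

theorem fromCols_conjTranspose_mul_mul_fromCols_of_orthogonal [Fintype m] {V : Matrix m m ℂ}
    (hV : V.IsHermitian) {X : Matrix m n ℂ} {Y : Matrix m o ℂ} (hXY : Xᴴ * V * Y = 0) :
    (fromCols X Y)ᴴ * V * fromCols X Y = fromBlocks (Xᴴ * V * X) 0 0 (Yᴴ * V * Y) := by
  have hYX : Yᴴ * V * X = 0 := by
    rw [← conjTranspose_conjTranspose (Yᴴ * V * X)]
    simp only [conjTranspose_mul, conjTranspose_conjTranspose, hV.eq, ← Matrix.mul_assoc, hXY,
      conjTranspose_zero]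
  rw [conjTranspose_fromCols_eq_fromRows_conjTranspose, fromRows_mul, fromRows_mul_fromCols,
    hXY, hYX]

theorem norm_det_fromCols_sq_mul_norm_det [Fintype n] [Fintype o] [DecidableEq n] [DecidableEq o]
    {V : Matrix (n ⊕ o) (n ⊕ o) ℂ} (hV : V.IsHermitian) {X : Matrix (n ⊕ o) n ℂ}
    {Y : Matrix (n ⊕ o) o ℂ} (hXY : Xᴴ * V * Y = 0) :
    ‖(fromCols X Y).det‖ ^ 2 * ‖V.det‖ = ‖(Xᴴ * V * X).det‖ * ‖(Yᴴ * V * Y).det‖ := by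
  have h := congrArg (‖det ·‖) (fromCols_conjTranspose_mul_mul_fromCols_of_orthogonal hV hXY)
  simp only [det_mul, det_conjTranspose, det_fromBlocks_zero₂₁, norm_mul, norm_star] at h
  linear_combination h

theorem norm_det_fromCols_whitening [Fintype n] [Fintype o] [DecidableEq n] [DecidableEq o]
    {V : Matrix (n ⊕ o) (n ⊕ o) ℂ} (hV : V.IsHermitian) (hVdet : V.det ≠ 0)
    {X : Matrix (n ⊕ o) n ℂ} {Y : Matrix (n ⊕ o) o ℂ} (hXY : Xᴴ * V * Y = 0)
    {Q : Matrix n n ℂ} (hQ : IsUnit Q) (hQfac : Xᴴ * V * X = Qᴴ * Q)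
    {R : Matrix n n ℂ} (hR : Rᴴ * R = 1) (Bh : Matrix n n ℂ) :
    ‖(fromCols (X * Q⁻¹ * R * Bh) Y).det‖ = √(‖(Yᴴ * V * Y).det‖ / ‖V.det‖) * ‖Bh.det‖ := by
  have hQd : ‖Q.det‖ ≠ 0 := norm_ne_zero_iff.mpr ((isUnit_iff_isUnit_det Q).mp hQ).ne_zero
  have hVd : ‖V.det‖ ≠ 0 := norm_ne_zero_iff.mpr hVdet
  have hsq := norm_det_fromCols_sq_mul_norm_det hV hXY
  rw [hQfac, det_mul, det_conjTranspose, norm_mul, norm_star] at hsq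
  have hsqrt : √(‖(Yᴴ * V * Y).det‖ / ‖V.det‖) = ‖(fromCols X Y).det‖ / ‖Q.det‖ := by
    rw [Real.sqrt_eq_iff_eq_sq (by positivity) (by positivity)]
    field_simp
    linear_combination -hsq
  rw [hsqrt, show X * Q⁻¹ * R * Bh = X * (Q⁻¹ * R * Bh) by simp only [Matrix.mul_assoc],
    det_fromCols_mul, det_mul, det_mul, det_nonsing_inv, Ring.inverse_eq_inv]
  simp only [norm_mul, norm_inv, norm_det_eq_one_of_conjTranspose_mul_self_eq_one hR]
  ring

end Matrix

theorem jisa_single_block_cost_invariance_general {d e : ℕ}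
    (V : Matrix (Fin d ⊕ Fin e) (Fin d ⊕ Fin e) ℂ) (hV : V.PosDef)
    (Wt : Matrix (Fin d ⊕ Fin e) (Fin e) ℂ)
    (B Bh : Matrix (Fin d) (Fin d) ℂ)
    (X₁ X₂ : Matrix (Fin d ⊕ Fin e) (Fin d) ℂ)
    (hX₁null : X₁ᴴ * V * Wt = 0) (hX₂null : X₂ᴴ * V * Wt = 0)
    (Q₁ Q₂ : Matrix (Fin d) (Fin d) ℂ) (hQ₁ : IsUnit Q₁) (hQ₂ : IsUnit Q₂)
    (hQ₁fac : X₁ᴴ * V * X₁ = Q₁ᴴ * Q₁) (hQ₂fac : X₂ᴴ * V * X₂ = Q₂ᴴ * Q₂)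
    (R₁ R₂ : Matrix (Fin d) (Fin d) ℂ)
    (hR₁ : R₁ᴴ * R₁ = 1) (hR₂ : R₂ᴴ * R₂ = 1) :
    (fun (Wbar : Matrix (Fin d ⊕ Fin e) (Fin d) ℂ) =>
        ((Wbarᴴ * V * Wbar * B⁻¹).trace.re
          - 2 * Real.log ‖(Matrix.fromCols Wbar Wt)ᴴ.det‖))
      (X₁ * Q₁⁻¹ * R₁ * Bh)
    = (fun (Wbar : Matrix (Fin d ⊕ Fin e) (Fin d) ℂ) =>
        ((Wbarᴴ * V * Wbar * B⁻¹).trace.re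
          - 2 * Real.log ‖(Matrix.fromCols Wbar Wt)ᴴ.det‖))
      (X₂ * Q₂⁻¹ * R₂ * Bh) := by
  have hVdet : V.det ≠ 0 := hV.det_pos.ne'
  simp only [det_conjTranspose, norm_star,
    conjTranspose_mul_mul_self_of_whitening hQ₁ hQ₁fac hR₁,
    conjTranspose_mul_mul_self_of_whitening hQ₂ hQ₂fac hR₂,
    norm_det_fromCols_whitening hV.1 hVdet hX₁null hQ₁ hQ₁fac hR₁,
    norm_det_fromCols_whitening hV.1 hVdet hX₂null hQ₂ hQ₂fac hR₂]

/-- Invariance of the surrogate cost in the single sub-demixing matrix update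
(Theorem 1, invariance part).  The rows of `W` other than block `ℓ` are the
conjugated columns of the fixed matrix `Wt`; the updated block is
`W̄ = X Q⁻¹ R Bh`.  The value of the cost
`tr(W̄ᴴ V W̄ B⁻¹).re − 2 log|det W|` is independent of the unitary matrix `R`
and of the full-column-rank matrix `X` satisfying the null-space condition
`Xᴴ V Wt = 0`. -/
theorem jisa_single_block_cost_invariance {d e : ℕ}
    (V : Matrix (Fin d ⊕ Fin e) (Fin d ⊕ Fin e) ℂ) (hV : V.PosDef)
    (Wt : Matrix (Fin d ⊕ Fin e) (Fin e) ℂ)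
    (B Bh : Matrix (Fin d) (Fin d) ℂ) (hB : B.PosDef) (hBh : Bhᴴ * Bh = B)
    (X₁ X₂ : Matrix (Fin d ⊕ Fin e) (Fin d) ℂ)
    (hX₁rank : X₁.rank = d) (hX₂rank : X₂.rank = d)
    (hX₁null : X₁ᴴ * V * Wt = 0) (hX₂null : X₂ᴴ * V * Wt = 0)
    (Q₁ Q₂ : Matrix (Fin d) (Fin d) ℂ) (hQ₁ : IsUnit Q₁) (hQ₂ : IsUnit Q₂)
    (hQ₁fac : X₁ᴴ * V * X₁ = Q₁ᴴ * Q₁) (hQ₂fac : X₂ᴴ * V * X₂ = Q₂ᴴ * Q₂)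
    (R₁ R₂ : Matrix (Fin d) (Fin d) ℂ)
    (hR₁ : R₁ᴴ * R₁ = 1) (hR₂ : R₂ᴴ * R₂ = 1) :
    (fun (Wbar : Matrix (Fin d ⊕ Fin e) (Fin d) ℂ) =>
        ((Wbarᴴ * V * Wbar * B⁻¹).trace.re
          - 2 * Real.log ‖(Matrix.fromCols Wbar Wt)ᴴ.det‖))
      (X₁ * Q₁⁻¹ * R₁ * Bh)
    = (fun (Wbar : Matrix (Fin d ⊕ Fin e) (Fin d) ℂ) =>
        ((Wbarᴴ * V * Wbar * B⁻¹).trace.re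
          - 2 * Real.log ‖(Matrix.fromCols Wbar Wt)ᴴ.det‖))
      (X₂ * Q₂⁻¹ * R₂ * Bh) :=
  jisa_single_block_cost_invariance_general V hV Wt B Bh X₁ X₂ hX₁null hX₂null Q₁ Q₂ hQ₁ hQ₂ hQ₁fac
    hQ₂fac R₁ R₂ hR₁ hR₂
end

section
/- In the two-subspace JISA problem with M = d₁ + d₂, among all assignments of the M orthonormal eigenvectors u₁,…,u_M (with eigenvalues λ₁ ≥ ⋯ ≥ λ_M of Q⁻ᴴV₁Q⁻¹) into a block U₁ of d₁ scaled columns u_i/√λ_i and a block U₂ of d₂ unscaled columns, the assignment that puts the d₁ eigenvectors with smallest eigenvalues into U₁ maximizes |det [U₁ U₂]|, and hence globally minimizes the surrogate cost Σ_{ℓ=1,2} tr(W̄_ℓᴴ V_ℓ W̄_ℓ) − 2 log|det W| with W = [W̄₁ W̄₂]ᴴ, W̄_ℓ = Q⁻¹ U_ℓ. -/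
open Matrix ComplexOrder

/-!
With `D_S` the diagonal matrix of column scalings (`1/√λ_j` for `j ∈ S`, `1` otherwise), the
assignment matrix is `W_S = Q⁻¹ U D_S`. Since `Q⁻ᴴ V₁ Q⁻¹ = U Λ Uᴴ` and `Q⁻ᴴ V₂ Q⁻¹ = 1 = U Uᴴ`,
both congruences `W_Sᴴ V_ℓ W_S` are diagonal, with entries `λ_j D_S(j)²` and `D_S(j)²`; each of
them is `1` on the columns where the cost reads it, so the trace part of the cost is `M` for every
assignment and only `-2 log |det W_S|` depends on `S`. As `|det U| = 1`,
`|det W_S| = |det Q⁻¹| ∏_{j ∈ S} λ_j^{-1/2}`, and an exchange between `S \ S₀` and `S₀ \ S`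
(every index of the first is below every index of the second) shows this product is largest for
the `d₁` smallest eigenvalues.
-/

namespace Finset

theorem prod_le_prod_of_card_eq_of_forall_le {ι R : Type*} [CommMonoidWithZero R] [LinearOrder R]
    [ZeroLEOneClass R] [PosMulMono R] {s t : Finset ι} {f : ι → R} (hcard : #s = #t)
    (h0 : ∀ i ∈ s, 0 ≤ f i) (hle : ∀ i ∈ s, ∀ j ∈ t, f i ≤ f j) :
    ∏ i ∈ s, f i ≤ ∏ j ∈ t, f j := by
  obtain rfl | hs := s.eq_empty_or_nonempty
  · rw [card_empty, eq_comm, card_eq_zero] at hcard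
    simp [hcard]
  obtain ⟨i₀, hi₀, hmax⟩ := s.exists_max_image f hs
  calc ∏ i ∈ s, f i ≤ ∏ _i ∈ s, f i₀ := prod_le_prod h0 hmax
    _ = ∏ _j ∈ t, f i₀ := by rw [prod_const, prod_const, hcard]
    _ ≤ ∏ j ∈ t, f j := prod_le_prod (fun _ _ => h0 i₀ hi₀) (hle i₀ hi₀)

theorem prod_le_prod_of_isUpperSet {ι R : Type*} [LinearOrder ι] [CommMonoidWithZero R]
    [LinearOrder R] [ZeroLEOneClass R] [PosMulMono R] {s t : Finset ι} {f : ι → R}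
    (hf : Monotone f) (h0 : ∀ i, 0 ≤ f i) (ht : IsUpperSet (t : Set ι)) (hcard : #s = #t) :
    ∏ i ∈ s, f i ≤ ∏ j ∈ t, f j := by
  rw [← prod_inter_mul_prod_sdiff s t, ← prod_inter_mul_prod_sdiff t s, inter_comm]
  refine mul_le_mul_of_nonneg_left ?_ (prod_nonneg fun i _ => h0 i)
  refine prod_le_prod_of_card_eq_of_forall_le (card_sdiff_comm hcard) (fun i _ => h0 i) ?_
  intro i hi j hj
  rw [mem_sdiff] at hi hj
  exact hf (le_of_not_ge fun hji => hi.2 (ht hji hj.1))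

end Finset

theorem Fin.isUpperSet_filter_le_val (m n : ℕ) :
    IsUpperSet ((Finset.univ.filter fun j : Fin (m + n) => n ≤ (j : ℕ)) : Set (Fin (m + n))) := by
  intro i j hij hi
  simp only [Finset.coe_filter, Finset.mem_univ, true_and, Set.mem_ofPred_eq] at hi ⊢
  exact hi.trans hij

theorem Fin.card_filter_le_val (m n : ℕ) :
    (Finset.univ.filter fun j : Fin (m + n) => n ≤ (j : ℕ)).card = m := by
  have := Finset.card_filter_add_card_filter_not (s := Finset.univ)
    (fun j : Fin (m + n) => (j : ℕ) < n)
  simp only [not_lt, Finset.card_univ, Fintype.card_fin, Fin.card_filter_val_lt] at this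
  omega

section ColumnScale

variable {n : Type*} [DecidableEq n]

noncomputable def columnScale (Λ : n → ℝ) (S : Finset n) (j : n) : ℝ :=
  if j ∈ S then (√(Λ j))⁻¹ else 1

theorem columnScale_nonneg (Λ : n → ℝ) (S : Finset n) (j : n) : 0 ≤ columnScale Λ S j := by
  unfold columnScale; split_ifs <;> positivity

theorem prod_columnScale [Fintype n] (Λ : n → ℝ) (S : Finset n) :
    ∏ j, columnScale Λ S j = ∏ j ∈ S, (√(Λ j))⁻¹ := by
  simp only [columnScale, Finset.prod_ite_mem, Finset.univ_inter]

theorem columnScale_mul_self_mul {Λ : n → ℝ} {S : Finset n} {j : n} (hj : j ∈ S) (hΛ : 0 < Λ j) :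
    columnScale Λ S j * Λ j * columnScale Λ S j = 1 := by
  rw [columnScale, if_pos hj, mul_right_comm, ← mul_inv, Real.mul_self_sqrt hΛ.le,
    inv_mul_cancel₀ hΛ.ne']

theorem columnScale_of_notMem {Λ : n → ℝ} {S : Finset n} {j : n} (hj : j ∉ S) :
    columnScale Λ S j = 1 :=
  if_neg hj

end ColumnScale

namespace Matrix

variable {n : Type*} [Fintype n] [DecidableEq n]

theorem norm_det_eq_one_of_conjTranspose_mul_self {U : Matrix n n ℂ} (hU : Uᴴ * U = 1) :
    ‖U.det‖ = 1 :=
  CStarRing.norm_of_mem_unitary (det_of_mem_unitary (mem_unitaryGroup_iff'.2 hU))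

theorem conjTranspose_mul_mul_diagonal_eq_diagonal {U P V : Matrix n n ℂ} {μ : n → ℂ}
    (hU : Uᴴ * U = 1) (hP : Pᴴ * V * P = U * diagonal μ * Uᴴ) (d : n → ℂ) :
    (P * (U * diagonal d))ᴴ * V * (P * (U * diagonal d))
      = diagonal fun j => star (d j) * μ j * d j := by
  calc (P * (U * diagonal d))ᴴ * V * (P * (U * diagonal d))
      = (diagonal d)ᴴ * Uᴴ * (Pᴴ * V * P) * (U * diagonal d) := by
        simp only [conjTranspose_mul, Matrix.mul_assoc]
    _ = (diagonal d)ᴴ * (Uᴴ * U) * diagonal μ * (Uᴴ * U) * diagonal d := by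
        rw [hP]; simp only [Matrix.mul_assoc]
    _ = diagonal fun j => star (d j) * μ j * d j := by
        rw [hU, Matrix.mul_one, Matrix.mul_one, diagonal_conjTranspose, diagonal_mul_diagonal,
          diagonal_mul_diagonal]
        rfl

noncomputable def scaledEigenbasis (U : Matrix n n ℂ) (Λ : n → ℝ) (S : Finset n) :
    Matrix n n ℂ :=
  of fun i j => if j ∈ S then U i j / (√(Λ j) : ℂ) else U i j

theorem scaledEigenbasis_eq_mul_diagonal (U : Matrix n n ℂ) (Λ : n → ℝ) (S : Finset n) :
    scaledEigenbasis U Λ S = U * diagonal fun j => (columnScale Λ S j : ℂ) := by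
  ext i j
  rw [mul_diagonal, scaledEigenbasis, of_apply, columnScale]
  split_ifs <;> simp [div_eq_mul_inv]

theorem norm_det_mul_scaledEigenbasis {U : Matrix n n ℂ} (hU : Uᴴ * U = 1) (P : Matrix n n ℂ)
    (Λ : n → ℝ) (S : Finset n) :
    ‖(P * scaledEigenbasis U Λ S).det‖ = ‖P.det‖ * ∏ j ∈ S, (√(Λ j))⁻¹ := by
  rw [scaledEigenbasis_eq_mul_diagonal, det_mul, det_mul, norm_mul, norm_mul,
    norm_det_eq_one_of_conjTranspose_mul_self hU, one_mul, det_diagonal, norm_prod,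
    ← prod_columnScale]
  simp only [Complex.norm_real, Real.norm_of_nonneg (columnScale_nonneg Λ S _)]

theorem conjTranspose_mul_mul_scaledEigenbasis {U P V : Matrix n n ℂ} {μ : n → ℝ}
    (hU : Uᴴ * U = 1) (hP : Pᴴ * V * P = U * diagonal (fun j => (μ j : ℂ)) * Uᴴ)
    (Λ : n → ℝ) (S : Finset n) (j : n) :
    ((P * scaledEigenbasis U Λ S)ᴴ * V * (P * scaledEigenbasis U Λ S)) j j
      = (columnScale Λ S j * μ j * columnScale Λ S j : ℝ) := by
  rw [scaledEigenbasis_eq_mul_diagonal, conjTranspose_mul_mul_diagonal_eq_diagonal hU hP,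
    diagonal_apply_eq, Complex.star_def, Complex.conj_ofReal]
  push_cast; rfl

theorem sum_diag_conjTranspose_mul_mul_scaledEigenbasis {U P V₁ V₂ : Matrix n n ℂ} {Λ : n → ℝ}
    (hU : Uᴴ * U = 1) (hΛ : ∀ j, 0 < Λ j)
    (hP₁ : Pᴴ * V₁ * P = U * diagonal (fun j => (Λ j : ℂ)) * Uᴴ) (hP₂ : Pᴴ * V₂ * P = 1)
    (S : Finset n) :
    ∑ j ∈ S, ((P * scaledEigenbasis U Λ S)ᴴ * V₁ * (P * scaledEigenbasis U Λ S)) j j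
      + ∑ j ∈ Sᶜ, ((P * scaledEigenbasis U Λ S)ᴴ * V₂ * (P * scaledEigenbasis U Λ S)) j j
      = Fintype.card n := by
  have hP₂' : Pᴴ * V₂ * P = U * diagonal (fun _ => ((1 : ℝ) : ℂ)) * Uᴴ := by
    rw [hP₂, Complex.ofReal_one, diagonal_one, Matrix.mul_one, mul_eq_one_comm.1 hU]
  have h₁ : ∀ j ∈ S,
      ((P * scaledEigenbasis U Λ S)ᴴ * V₁ * (P * scaledEigenbasis U Λ S)) j j = 1 := fun j hj => by
    rw [conjTranspose_mul_mul_scaledEigenbasis hU hP₁, columnScale_mul_self_mul hj (hΛ j),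
      Complex.ofReal_one]
  have h₂ : ∀ j ∈ Sᶜ,
      ((P * scaledEigenbasis U Λ S)ᴴ * V₂ * (P * scaledEigenbasis U Λ S)) j j = 1 := fun j hj => by
    rw [conjTranspose_mul_mul_scaledEigenbasis hU hP₂',
      columnScale_of_notMem (Finset.mem_compl.1 hj)]
    norm_num
  rw [Finset.sum_congr rfl h₁, Finset.sum_congr rfl h₂, Finset.sum_const, Finset.sum_const,
    ← add_smul, Finset.card_add_card_compl, nsmul_one]

theorem norm_det_mul_scaledEigenbasis_le [LinearOrder n] {U : Matrix n n ℂ} (hU : Uᴴ * U = 1)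
    (P : Matrix n n ℂ) {Λ : n → ℝ} (hΛ : Antitone Λ) (hΛpos : ∀ j, 0 < Λ j) {s t : Finset n}
    (ht : IsUpperSet (t : Set n)) (hcard : s.card = t.card) :
    ‖(P * scaledEigenbasis U Λ s).det‖ ≤ ‖(P * scaledEigenbasis U Λ t).det‖ := by
  rw [norm_det_mul_scaledEigenbasis hU, norm_det_mul_scaledEigenbasis hU]
  refine mul_le_mul_of_nonneg_left (Finset.prod_le_prod_of_isUpperSet ?_ (fun j => ?_) ht hcard)
    (norm_nonneg _)
  · exact fun i j hij => inv_anti₀ (Real.sqrt_pos.2 (hΛpos j)) (Real.sqrt_le_sqrt (hΛ hij))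
  · positivity

end Matrix

theorem jisa_two_subspace_optimal_assignment_general {d₁ d₂ : ℕ}
    (V₁ V₂ : Matrix (Fin (d₁ + d₂)) (Fin (d₁ + d₂)) ℂ)
    (Q : Matrix (Fin (d₁ + d₂)) (Fin (d₁ + d₂)) ℂ)
    (hQ : IsUnit Q) (hQfac : Qᴴ * Q = V₂)
    (U : Matrix (Fin (d₁ + d₂)) (Fin (d₁ + d₂)) ℂ)
    (hUorth : Uᴴ * U = 1)
    (Λ : Fin (d₁ + d₂) → ℝ) (hΛpos : ∀ i, 0 < Λ i)
    (hΛdec : ∀ i j, i ≤ j → Λ j ≤ Λ i)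
    (heig : (Q⁻¹)ᴴ * V₁ * Q⁻¹
      = U * Matrix.diagonal (fun i => (Λ i : ℂ)) * Uᴴ) :
    let Mmat : Finset (Fin (d₁ + d₂)) → Matrix (Fin (d₁ + d₂)) (Fin (d₁ + d₂)) ℂ :=
      fun S => Matrix.of fun i j =>
        if j ∈ S then U i j / (Real.sqrt (Λ j) : ℂ) else U i j
    let W : Finset (Fin (d₁ + d₂)) → Matrix (Fin (d₁ + d₂)) (Fin (d₁ + d₂)) ℂ :=
      fun S => Q⁻¹ * Mmat S
    let cost : Finset (Fin (d₁ + d₂)) → ℝ := fun S =>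
      (∑ j ∈ S, ((W S)ᴴ * V₁ * W S) j j
        + ∑ j ∈ Sᶜ, ((W S)ᴴ * V₂ * W S) j j).re
      - 2 * Real.log (‖(W S).det‖)
    let S₀ : Finset (Fin (d₁ + d₂)) :=
      Finset.univ.filter (fun j => d₂ ≤ (j : ℕ))
    ∀ S : Finset (Fin (d₁ + d₂)), S.card = d₁ →
      ‖(W S).det‖ ≤ ‖(W S₀).det‖ ∧ cost S₀ ≤ cost S := by
  intro Mmat W cost S₀ S hS
  have hQdet : IsUnit Q.det := (isUnit_iff_isUnit_det Q).1 hQ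
  have hQV₂ : (Q⁻¹)ᴴ * V₂ * Q⁻¹ = 1 := by
    rw [← hQfac, conjTranspose_nonsing_inv, ← Matrix.mul_assoc,
      nonsing_inv_mul _ (by rw [det_conjTranspose]; exact hQdet.star), Matrix.one_mul,
      mul_nonsing_inv _ hQdet]
  have hW : ∀ T, W T = Q⁻¹ * scaledEigenbasis U Λ T := fun _ => rfl
  have hcost : ∀ T, cost T = (d₁ + d₂ : ℕ) - 2 * Real.log ‖(W T).det‖ := fun T => by
    show (_ + _ : ℂ).re - _ = _
    rw [hW, sum_diag_conjTranspose_mul_mul_scaledEigenbasis hUorth hΛpos heig hQV₂,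
      Fintype.card_fin, Complex.natCast_re]
  have hdet : ‖(W S).det‖ ≤ ‖(W S₀).det‖ :=
    norm_det_mul_scaledEigenbasis_le hUorth Q⁻¹ hΛdec hΛpos (Fin.isUpperSet_filter_le_val d₁ d₂)
      (hS.trans (Fin.card_filter_le_val d₁ d₂).symm)
  have hpos : 0 < ‖(W S).det‖ := by
    rw [hW, norm_det_mul_scaledEigenbasis hUorth]
    exact mul_pos (norm_pos_iff.2 (isUnit_nonsing_inv_det Q hQdet).ne_zero)
      (Finset.prod_pos fun j _ => by have := hΛpos j; positivity)
  refine ⟨hdet, ?_⟩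
  rw [hcost, hcost]
  gcongr

/-- Optimal assignment of eigenvectors in the two-subspace JISA problem
(Theorem 2, optimality part).  An assignment is a subset `S` of column indices
with `|S| = d₁`; column `j ∈ S` is the scaled eigenvector `u_j/√λ_j`, and
column `j ∉ S` is `u_j`.  With eigenvalues in decreasing order, the assignment
`S₀` of the `d₁` smallest eigenvalues (the last `d₁` indices) maximizes
`|det [U₁ U₂]|` and hence globally minimizes the surrogate cost
`Σ_ℓ tr(W̄_ℓᴴ V_ℓ W̄_ℓ) − 2 log|det W|`. -/
theorem jisa_two_subspace_optimal_assignment {d₁ d₂ : ℕ}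
    (V₁ V₂ : Matrix (Fin (d₁ + d₂)) (Fin (d₁ + d₂)) ℂ)
    (hV₁ : V₁.PosDef) (hV₂ : V₂.PosDef)
    (Q : Matrix (Fin (d₁ + d₂)) (Fin (d₁ + d₂)) ℂ)
    (hQ : IsUnit Q) (hQfac : Qᴴ * Q = V₂)
    (U : Matrix (Fin (d₁ + d₂)) (Fin (d₁ + d₂)) ℂ)
    (hUorth : Uᴴ * U = 1)
    (Λ : Fin (d₁ + d₂) → ℝ) (hΛpos : ∀ i, 0 < Λ i)
    (hΛdec : ∀ i j, i ≤ j → Λ j ≤ Λ i)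
    (heig : (Q⁻¹)ᴴ * V₁ * Q⁻¹
      = U * Matrix.diagonal (fun i => (Λ i : ℂ)) * Uᴴ) :
    let Mmat : Finset (Fin (d₁ + d₂)) → Matrix (Fin (d₁ + d₂)) (Fin (d₁ + d₂)) ℂ :=
      fun S => Matrix.of fun i j =>
        if j ∈ S then U i j / (Real.sqrt (Λ j) : ℂ) else U i j
    let W : Finset (Fin (d₁ + d₂)) → Matrix (Fin (d₁ + d₂)) (Fin (d₁ + d₂)) ℂ :=
      fun S => Q⁻¹ * Mmat S
    let cost : Finset (Fin (d₁ + d₂)) → ℝ := fun S =>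
      (∑ j ∈ S, ((W S)ᴴ * V₁ * W S) j j
        + ∑ j ∈ Sᶜ, ((W S)ᴴ * V₂ * W S) j j).re
      - 2 * Real.log (‖(W S).det‖)
    let S₀ : Finset (Fin (d₁ + d₂)) :=
      Finset.univ.filter (fun j => d₂ ≤ (j : ℕ))
    ∀ S : Finset (Fin (d₁ + d₂)), S.card = d₁ →
      ‖(W S).det‖ ≤ ‖(W S₀).det‖ ∧ cost S₀ ≤ cost S :=
  jisa_two_subspace_optimal_assignment_general V₁ V₂ Q hQ hQfac U hUorth Λ hΛpos hΛdec heig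
end

section
/- Let A = [X W̃]ᴴ be square and invertible with X ∈ ℂ^{M×(d₁+d₂)}, W̃ ∈ ℂ^{M×(M−d₁−d₂)}, and suppose Xᴴ W̃ = 0. Let V₁, V₂ be Hermitian positive definite, P_ℓ = V_ℓ⁻¹ X, Ṽ_ℓ = P_ℓᴴ V_ℓ P_ℓ = Xᴴ V_ℓ⁻¹ X for ℓ = 1,2, and let Ũ₁ ∈ ℂ^{(d₁+d₂)×d₁}, Ũ₂ ∈ ℂ^{(d₁+d₂)×d₂}. Then |det [P₁Ũ₁ P₂Ũ₂ W̃]| = |det A⁻¹| · |det [Ṽ₁Ũ₁ Ṽ₂Ũ₂]| · |det(W̃ᴴ W̃)|. -/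
/-!
Since `Xᴴ W̃ = 0`, the product `A · [P₁Ũ₁ P₂Ũ₂ W̃]` is block lower triangular with diagonal
blocks `Xᴴ [P₁Ũ₁ P₂Ũ₂] = [Ṽ₁Ũ₁ Ṽ₂Ũ₂]` and `W̃ᴴ W̃`; taking determinants and dividing by the
unit `det A` gives the factorization.
-/

open Matrix ComplexOrder

namespace Matrix

variable {m n p R : Type*}

theorem conjTranspose_fromCols_mul_fromCols_of_conjTranspose_mul_eq_zero
    [Fintype m] [Semiring R] [StarRing R]
    (X Y : Matrix m n R) (W : Matrix m p R) (h : Xᴴ * W = 0) :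
    (fromCols X W)ᴴ * fromCols Y W = fromBlocks (Xᴴ * Y) 0 (Wᴴ * Y) (Wᴴ * W) := by
  rw [conjTranspose_fromCols_eq_fromRows_conjTranspose, fromRows_mul, mul_fromCols,
    mul_fromCols, h, fromRows_fromCols_eq_fromBlocks]

variable [Fintype n] [Fintype p] [DecidableEq n] [DecidableEq p]

theorem det_conjTranspose_fromCols_mul_det_fromCols [CommRing R] [StarRing R]
    (X Y : Matrix (n ⊕ p) n R) (W : Matrix (n ⊕ p) p R) (h : Xᴴ * W = 0) :
    (fromCols X W)ᴴ.det * (fromCols Y W).det = (Xᴴ * Y).det * (Wᴴ * W).det := by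
  rw [← det_mul, conjTranspose_fromCols_mul_fromCols_of_conjTranspose_mul_eq_zero X Y W h,
    det_fromBlocks_zero₁₂]

theorem norm_det_fromCols_of_conjTranspose_mul_eq_zero [NormedField R] [StarRing R]
    (X Y : Matrix (n ⊕ p) n R) (W : Matrix (n ⊕ p) p R) (h : Xᴴ * W = 0)
    (hA : IsUnit (fromCols X W)ᴴ) :
    ‖(fromCols Y W).det‖ = ‖(fromCols X W)ᴴ⁻¹.det‖ * ‖(Xᴴ * Y).det‖ * ‖(Wᴴ * W).det‖ := by
  have hdetA : (fromCols X W)ᴴ.det ≠ 0 := ((isUnit_iff_isUnit_det _).mp hA).ne_zero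
  rw [det_nonsing_inv, Ring.inverse_eq_inv', mul_assoc, ← norm_mul,
    ← det_conjTranspose_fromCols_mul_det_fromCols X Y W h, norm_mul, norm_inv,
    inv_mul_cancel_left₀ (norm_ne_zero_iff.mpr hdetA)]

end Matrix

theorem jisa_pairwise_det_factorization_general {d₁ d₂ e : ℕ}
    (X : Matrix ((Fin d₁ ⊕ Fin d₂) ⊕ Fin e) (Fin d₁ ⊕ Fin d₂) ℂ)
    (Wt : Matrix ((Fin d₁ ⊕ Fin d₂) ⊕ Fin e) (Fin e) ℂ)
    (horth : Xᴴ * Wt = 0)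
    (hA : IsUnit ((Matrix.fromCols X Wt)ᴴ))
    (V₁ V₂ : Matrix ((Fin d₁ ⊕ Fin d₂) ⊕ Fin e) ((Fin d₁ ⊕ Fin d₂) ⊕ Fin e) ℂ)
    (Ut₁ : Matrix (Fin d₁ ⊕ Fin d₂) (Fin d₁) ℂ)
    (Ut₂ : Matrix (Fin d₁ ⊕ Fin d₂) (Fin d₂) ℂ) :
    ‖(Matrix.fromCols
        (Matrix.fromCols (V₁⁻¹ * X * Ut₁) (V₂⁻¹ * X * Ut₂)) Wt).det‖
    = ‖((Matrix.fromCols X Wt)ᴴ⁻¹).det‖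
      * ‖(Matrix.fromCols
          ((Xᴴ * V₁⁻¹ * X) * Ut₁) ((Xᴴ * V₂⁻¹ * X) * Ut₂)).det‖
      * ‖(Wtᴴ * Wt).det‖ := by
  rw [norm_det_fromCols_of_conjTranspose_mul_eq_zero X _ Wt horth hA, mul_fromCols]
  simp only [Matrix.mul_assoc]

/-- Determinant factorization used in the pairwise sub-demixing update
(equation (40)).  With `A = [X W̃]ᴴ` invertible, `Xᴴ W̃ = 0`,
`P_ℓ = V_ℓ⁻¹ X` and `Ṽ_ℓ = Xᴴ V_ℓ⁻¹ X`,
`|det [P₁Ũ₁ P₂Ũ₂ W̃]| = |det A⁻¹| · |det [Ṽ₁Ũ₁ Ṽ₂Ũ₂]| · |det(W̃ᴴ W̃)|`. -/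
theorem jisa_pairwise_det_factorization {d₁ d₂ e : ℕ}
    (X : Matrix ((Fin d₁ ⊕ Fin d₂) ⊕ Fin e) (Fin d₁ ⊕ Fin d₂) ℂ)
    (Wt : Matrix ((Fin d₁ ⊕ Fin d₂) ⊕ Fin e) (Fin e) ℂ)
    (hXrank : X.rank = d₁ + d₂) (hWtrank : Wt.rank = e)
    (horth : Xᴴ * Wt = 0)
    (hA : IsUnit ((Matrix.fromCols X Wt)ᴴ))
    (V₁ V₂ : Matrix ((Fin d₁ ⊕ Fin d₂) ⊕ Fin e) ((Fin d₁ ⊕ Fin d₂) ⊕ Fin e) ℂ)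
    (hV₁ : V₁.PosDef) (hV₂ : V₂.PosDef)
    (Ut₁ : Matrix (Fin d₁ ⊕ Fin d₂) (Fin d₁) ℂ)
    (Ut₂ : Matrix (Fin d₁ ⊕ Fin d₂) (Fin d₂) ℂ) :
    ‖(Matrix.fromCols
        (Matrix.fromCols (V₁⁻¹ * X * Ut₁) (V₂⁻¹ * X * Ut₂)) Wt).det‖
    = ‖((Matrix.fromCols X Wt)ᴴ⁻¹).det‖
      * ‖(Matrix.fromCols
          ((Xᴴ * V₁⁻¹ * X) * Ut₁) ((Xᴴ * V₂⁻¹ * X) * Ut₂)).det‖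
      * ‖(Wtᴴ * Wt).det‖ :=
  jisa_pairwise_det_factorization_general X Wt horth hA V₁ V₂ Ut₁ Ut₂
end

section
/- Pairwise sub-demixing update: let V₁, V₂ ∈ ℂ^{M×M} be Hermitian positive definite, W̄₃, …, W̄_L fixed full-column-rank blocks, and X ∈ ℂ^{M×(d₁+d₂)} full rank with Xᴴ [W̄₃ ⋯ W̄_L] = 0. Set P_ℓ = V_ℓ⁻¹ X and Ṽ_ℓ = P_ℓᴴ V_ℓ P_ℓ for ℓ = 1, 2. If (Ū₁, Ū₂) solves the two-subspace problem for the matrices Ṽ₁⁻¹, Ṽ₂⁻¹ (i.e., Ū_ℓᴴ Ṽ_ℓ⁻¹ Ū_ℓ = B_ℓ and Ū₂ᴴ Ṽ₁⁻¹ Ū₁ = Ū₁ᴴ Ṽ₂⁻¹ Ū₂ = 0), then W̄_ℓ = P_ℓ Ṽ_ℓ⁻¹ Ū_ℓ, ℓ = 1, 2, satisfies the stationarity conditions W̄_ℓᴴ V_ℓ W̄_ℓ = B_ℓ, W̄₂ᴴ V₁ W̄₁ = 0, W̄₁ᴴ V₂ W̄₂ = 0, and W̄_{ℓ'}ᴴ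 V_ℓ W̄_ℓ = 0 for ℓ = 1,2 and ℓ' ≥ 3. -/
open Matrix ComplexOrder

/-!
Since `V_ℓ W̄_ℓ = X Ṽ_ℓ⁻¹ Ū_ℓ` and `W̄_kᴴ X = Ū_kᴴ` (both `Ṽ_k` and `V_k` are Hermitian), every
quadratic form `Yᴴ V_ℓ W̄_ℓ` collapses to `Yᴴ X Ṽ_ℓ⁻¹ Ū_ℓ`: for `Y = W̄_k` it is the
two-subspace form `Ū_kᴴ Ṽ_ℓ⁻¹ Ū_ℓ`, and for `Y` a fixed block it vanishes because `Xᴴ Y = 0`.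
-/

namespace Matrix

lemma mulVec_injective_of_rank_eq_card {K m n : Type*} [Field K] [Fintype n] {X : Matrix m n K}
    (h : X.rank = Fintype.card n) : Function.Injective X.mulVec := by
  rw [← coe_mulVecLin, ← LinearMap.ker_eq_bot]
  have h_rank_nullity := X.mulVecLin.finrank_range_add_finrank_ker
  rw [← Matrix.rank, h, Module.finrank_fintype_fun_eq_card] at h_rank_nullity
  exact Submodule.finrank_eq_zero.mp (by omega)

variable {𝕜 m n p q : Type*} [RCLike 𝕜] [Fintype m] [Fintype n] [DecidableEq m]

lemma PosDef.conjTranspose_mul_inv_mul_of_rank_eq_card {V : Matrix m m 𝕜} (hV : V.PosDef)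
    {X : Matrix m n 𝕜} (hX : X.rank = Fintype.card n) : (Xᴴ * V⁻¹ * X).PosDef :=
  hV.inv.conjTranspose_mul_mul_same (mulVec_injective_of_rank_eq_card hX)

variable [DecidableEq n]

noncomputable def demixingUpdate (V : Matrix m m 𝕜) (X : Matrix m n 𝕜) (U : Matrix n p 𝕜) :
    Matrix m p 𝕜 :=
  V⁻¹ * X * (Xᴴ * V⁻¹ * X)⁻¹ * U

variable {V : Matrix m m 𝕜} {X : Matrix m n 𝕜}

lemma mul_demixingUpdate (hV : IsUnit V) (U : Matrix n p 𝕜) :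
    V * demixingUpdate V X U = X * (Xᴴ * V⁻¹ * X)⁻¹ * U := by
  simp only [demixingUpdate, Matrix.mul_assoc,
    mul_nonsing_inv_cancel_left V _ ((isUnit_iff_isUnit_det V).mp hV)]

lemma conjTranspose_demixingUpdate_mul (hV : V.IsHermitian) (hT : IsUnit (Xᴴ * V⁻¹ * X))
    (U : Matrix n p 𝕜) : (demixingUpdate V X U)ᴴ * X = Uᴴ := by
  have hT_herm : (Xᴴ * V⁻¹ * X)⁻¹ᴴ = (Xᴴ * V⁻¹ * X)⁻¹ :=
    (isHermitian_conjTranspose_mul_mul X hV.inv).inv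
  calc (demixingUpdate V X U)ᴴ * X
      = Uᴴ * ((Xᴴ * V⁻¹ * X)⁻¹ * (Xᴴ * V⁻¹ * X)) := by
        simp only [demixingUpdate, conjTranspose_mul, hV.inv.eq]
        rw [hT_herm]
        simp only [Matrix.mul_assoc]
    _ = Uᴴ := by
        rw [nonsing_inv_mul _ ((isUnit_iff_isUnit_det _).mp hT), Matrix.mul_one]

lemma demixingUpdate_conjTranspose_mul_mul_demixingUpdate {V' : Matrix m m 𝕜} (hV : V.PosDef)
    (hV' : V'.PosDef) (hX : X.rank = Fintype.card n) (U : Matrix n p 𝕜)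
    (U' : Matrix n q 𝕜) :
    (demixingUpdate V' X U')ᴴ * V * demixingUpdate V X U = U'ᴴ * (Xᴴ * V⁻¹ * X)⁻¹ * U := by
  rw [Matrix.mul_assoc, mul_demixingUpdate hV.isUnit, ← Matrix.mul_assoc, ← Matrix.mul_assoc,
    conjTranspose_demixingUpdate_mul hV'.isHermitian
      (hV'.conjTranspose_mul_inv_mul_of_rank_eq_card hX).isUnit]

lemma conjTranspose_mul_mul_demixingUpdate_eq_zero (hV : IsUnit V) {Y : Matrix m q 𝕜}
    (hXY : Xᴴ * Y = 0) (U : Matrix n p 𝕜) : Yᴴ * V * demixingUpdate V X U = 0 := by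
  have hYX : Yᴴ * X = 0 := by simpa using congrArg conjTranspose hXY
  rw [Matrix.mul_assoc, mul_demixingUpdate hV, ← Matrix.mul_assoc, ← Matrix.mul_assoc, hYX,
    Matrix.zero_mul, Matrix.zero_mul]

end Matrix

theorem jisa_pairwise_update_stationarity_general {d₁ d₂ e : ℕ}
    (V₁ V₂ : Matrix ((Fin d₁ ⊕ Fin d₂) ⊕ Fin e) ((Fin d₁ ⊕ Fin d₂) ⊕ Fin e) ℂ)
    (hV₁ : V₁.PosDef) (hV₂ : V₂.PosDef)
    (Wt : Matrix ((Fin d₁ ⊕ Fin d₂) ⊕ Fin e) (Fin e) ℂ)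
    (X : Matrix ((Fin d₁ ⊕ Fin d₂) ⊕ Fin e) (Fin d₁ ⊕ Fin d₂) ℂ)
    (hXrank : X.rank = d₁ + d₂) (hXnull : Xᴴ * Wt = 0)
    (B₁ : Matrix (Fin d₁) (Fin d₁) ℂ)
    (B₂ : Matrix (Fin d₂) (Fin d₂) ℂ)
    (Ubar₁ : Matrix (Fin d₁ ⊕ Fin d₂) (Fin d₁) ℂ)
    (Ubar₂ : Matrix (Fin d₁ ⊕ Fin d₂) (Fin d₂) ℂ)
    -- `(Ū₁, Ū₂)` solves the two-subspace problem for `(Ṽ₁⁻¹, Ṽ₂⁻¹)`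
    (hU₁fit : Ubar₁ᴴ * (Xᴴ * V₁⁻¹ * X)⁻¹ * Ubar₁ = B₁)
    (hU₂fit : Ubar₂ᴴ * (Xᴴ * V₂⁻¹ * X)⁻¹ * Ubar₂ = B₂)
    (hUcross₁ : Ubar₂ᴴ * (Xᴴ * V₁⁻¹ * X)⁻¹ * Ubar₁ = 0)
    (hUcross₂ : Ubar₁ᴴ * (Xᴴ * V₂⁻¹ * X)⁻¹ * Ubar₂ = 0) :
    let W₁ := V₁⁻¹ * X * (Xᴴ * V₁⁻¹ * X)⁻¹ * Ubar₁
    let W₂ := V₂⁻¹ * X * (Xᴴ * V₂⁻¹ * X)⁻¹ * Ubar₂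
    W₁ᴴ * V₁ * W₁ = B₁ ∧ W₂ᴴ * V₂ * W₂ = B₂ ∧
      W₂ᴴ * V₁ * W₁ = 0 ∧ W₁ᴴ * V₂ * W₂ = 0 ∧
      Wtᴴ * V₁ * W₁ = 0 ∧ Wtᴴ * V₂ * W₂ = 0 := by
  have hX : X.rank = Fintype.card (Fin d₁ ⊕ Fin d₂) := by simp [hXrank]
  exact ⟨(demixingUpdate_conjTranspose_mul_mul_demixingUpdate hV₁ hV₁ hX _ _).trans hU₁fit,
    (demixingUpdate_conjTranspose_mul_mul_demixingUpdate hV₂ hV₂ hX _ _).trans hU₂fit,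
    (demixingUpdate_conjTranspose_mul_mul_demixingUpdate hV₁ hV₂ hX _ _).trans hUcross₁,
    (demixingUpdate_conjTranspose_mul_mul_demixingUpdate hV₂ hV₁ hX _ _).trans hUcross₂,
    conjTranspose_mul_mul_demixingUpdate_eq_zero hV₁.isUnit hXnull _,
    conjTranspose_mul_mul_demixingUpdate_eq_zero hV₂.isUnit hXnull _⟩

/-- Pairwise sub-demixing update (Theorem 3, stationarity part).
`Wt` collects the fixed blocks `W̄₃, …, W̄_L`.  With `P_ℓ = V_ℓ⁻¹ X`,
`Ṽ_ℓ = Xᴴ V_ℓ⁻¹ X`, if `(Ū₁, Ū₂)` solves the two-subspace problem for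
`(Ṽ₁⁻¹, Ṽ₂⁻¹)`, then `W̄_ℓ = P_ℓ Ṽ_ℓ⁻¹ Ū_ℓ` satisfies the stationarity
conditions `W̄_ℓᴴ V_ℓ W̄_ℓ = B_ℓ`, `W̄₂ᴴ V₁ W̄₁ = 0`, `W̄₁ᴴ V₂ W̄₂ = 0`, and
`Wtᴴ V_ℓ W̄_ℓ = 0` (orthogonality against every fixed block). -/
theorem jisa_pairwise_update_stationarity {d₁ d₂ e : ℕ}
    (V₁ V₂ : Matrix ((Fin d₁ ⊕ Fin d₂) ⊕ Fin e) ((Fin d₁ ⊕ Fin d₂) ⊕ Fin e) ℂ)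
    (hV₁ : V₁.PosDef) (hV₂ : V₂.PosDef)
    (Wt : Matrix ((Fin d₁ ⊕ Fin d₂) ⊕ Fin e) (Fin e) ℂ) (hWtrank : Wt.rank = e)
    (X : Matrix ((Fin d₁ ⊕ Fin d₂) ⊕ Fin e) (Fin d₁ ⊕ Fin d₂) ℂ)
    (hXrank : X.rank = d₁ + d₂) (hXnull : Xᴴ * Wt = 0)
    (B₁ : Matrix (Fin d₁) (Fin d₁) ℂ) (hB₁ : B₁.PosDef)
    (B₂ : Matrix (Fin d₂) (Fin d₂) ℂ) (hB₂ : B₂.PosDef)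
    (Ubar₁ : Matrix (Fin d₁ ⊕ Fin d₂) (Fin d₁) ℂ)
    (Ubar₂ : Matrix (Fin d₁ ⊕ Fin d₂) (Fin d₂) ℂ)
    -- `(Ū₁, Ū₂)` solves the two-subspace problem for `(Ṽ₁⁻¹, Ṽ₂⁻¹)`
    (hU₁fit : Ubar₁ᴴ * (Xᴴ * V₁⁻¹ * X)⁻¹ * Ubar₁ = B₁)
    (hU₂fit : Ubar₂ᴴ * (Xᴴ * V₂⁻¹ * X)⁻¹ * Ubar₂ = B₂)
    (hUcross₁ : Ubar₂ᴴ * (Xᴴ * V₁⁻¹ * X)⁻¹ * Ubar₁ = 0)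
    (hUcross₂ : Ubar₁ᴴ * (Xᴴ * V₂⁻¹ * X)⁻¹ * Ubar₂ = 0) :
    let W₁ := V₁⁻¹ * X * (Xᴴ * V₁⁻¹ * X)⁻¹ * Ubar₁
    let W₂ := V₂⁻¹ * X * (Xᴴ * V₂⁻¹ * X)⁻¹ * Ubar₂
    W₁ᴴ * V₁ * W₁ = B₁ ∧ W₂ᴴ * V₂ * W₂ = B₂ ∧
      W₂ᴴ * V₁ * W₁ = 0 ∧ W₁ᴴ * V₂ * W₂ = 0 ∧
      Wtᴴ * V₁ * W₁ = 0 ∧ Wtᴴ * V₂ * W₂ = 0 :=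
  jisa_pairwise_update_stationarity_general V₁ V₂ hV₁ hV₂ Wt X hXrank hXnull B₁ B₂ Ubar₁ Ubar₂
    hU₁fit hU₂fit hUcross₁ hUcross₂
end

section
/- Let V ∈ ℂ^{M×M} be Hermitian positive definite, W an invertible M×M matrix with k-th row w_kᴴ, and fix all rows of W except row k. The function w ↦ wᴴ V w − 2 log|det W(w)| (where W(w) replaces row k by wᴴ) is minimized over w ∈ ℂ^M by w = γ (Ŵ V)⁻¹ e_k with normalization γ = (e_kᴴ (Ŵ V)⁻¹ᴴ V (Ŵ V)⁻¹ e_k)^{−1/2}, where Ŵ is any invertible matrix agreeing with W(w) on the rows other than k; equivalently the minimizer satisfies wᴴ V w = 1 and w_{k'}ᴴ V w = 0 for all k' ≠ k. -/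
/-!
With `y = Ŵ⁻¹ e_k = V x`, the determinant is linear in the replaced row:
`det W(w) = det Ŵ · wᴴ y = det Ŵ · ⟨w, x⟩_V`, where `⟨a, b⟩_V = aᴴ V b`. Up to the constant
`2 log |det Ŵ|` the objective is therefore `‖w‖_V² - 2 log |⟨w, x⟩_V|`. Cauchy–Schwarz bounds
`2 log |⟨w, x⟩_V|` by `log ‖w‖_V² + log ‖x‖_V²`, and `log a ≤ a - 1` then bounds the objective
below by `1 - log ‖x‖_V²`, which is attained at `w = x / ‖x‖_V`. Orthogonality to the other rows
of `Ŵ` is just `Ŵ V x = e_k`.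
-/

open Matrix ComplexOrder

theorem Real.one_sub_log_le_sub_two_log {a c p : ℝ} (hc : 0 < c) (hp : 0 < p)
    (h : p ^ 2 ≤ a * c) : 1 - Real.log c ≤ a - 2 * Real.log p := by
  have ha : 0 < a := pos_of_mul_pos_left ((pow_pos hp 2).trans_le h) hc.le
  have hlog := Real.log_le_log (pow_pos hp 2) h
  rw [Real.log_pow, Real.log_mul ha.ne' hc.ne', Nat.cast_ofNat] at hlog
  linarith [Real.log_le_sub_one_of_pos ha]

namespace Matrix

theorem det_updateRow_eq_det_mul_dotProduct {n α : Type*} [Fintype n] [DecidableEq n] [CommRing α]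
    {A : Matrix n n α} {y : n → α} {k : n} (hy : A *ᵥ y = Pi.single k 1) (u : n → α) :
    (A.updateRow k u).det = A.det * (u ⬝ᵥ y) := by
  have hadj : A.adjugate *ᵥ Pi.single k 1 = A.det • y := by
    rw [← hy, mulVec_mulVec, adjugate_mul, smul_mulVec, one_mulVec]
  calc (A.updateRow k u).det = (u ᵥ* A.adjugate) k := by
        rw [← cramer_transpose_apply, cramer_eq_adjugate_mulVec, ← adjugate_transpose,
          mulVec_transpose]
    _ = u ⬝ᵥ (A.adjugate *ᵥ Pi.single k 1) := by rw [mulVec_single_one]; rfl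
    _ = A.det * (u ⬝ᵥ y) := by rw [hadj, dotProduct_smul, smul_eq_mul]

variable {𝕜 n : Type*} [RCLike 𝕜] [Fintype n] {V : Matrix n n 𝕜} {x : n → 𝕜}

theorem PosSemidef.norm_dotProduct_mulVec_sq_le (hV : V.PosSemidef) (x y : n → 𝕜) :
    ‖star x ⬝ᵥ V *ᵥ y‖ ^ 2 ≤ RCLike.re (star x ⬝ᵥ V *ᵥ x) * RCLike.re (star y ⬝ᵥ V *ᵥ y) := by
  let _ := V.toSeminormedAddCommGroup hV
  let _ := V.toInnerProductSpace hV
  have hinner (a b : n → 𝕜) : inner 𝕜 a b = star a ⬝ᵥ V *ᵥ b := dotProduct_comm _ _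
  have h := inner_mul_inner_self_le (𝕜 := 𝕜) x y
  rwa [norm_inner_symm y x, ← sq, hinner, hinner, hinner] at h

theorem IsHermitian.ofReal_re_dotProduct_mulVec_self (hV : V.IsHermitian) (x : n → 𝕜) :
    (RCLike.re (star x ⬝ᵥ V *ᵥ x) : 𝕜) = star x ⬝ᵥ V *ᵥ x :=
  RCLike.ext (RCLike.ofReal_re _) (by rw [RCLike.ofReal_im, hV.im_star_dotProduct_mulVec_self])

noncomputable def normalizeBy (V : Matrix n n 𝕜) (x : n → 𝕜) : n → 𝕜 :=
  (((√(RCLike.re (star x ⬝ᵥ V *ᵥ x)))⁻¹ : ℝ) : 𝕜) • x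

theorem star_normalizeBy_dotProduct_mulVec (z : n → 𝕜) :
    star (V.normalizeBy x) ⬝ᵥ V *ᵥ z
      = ((√(RCLike.re (star x ⬝ᵥ V *ᵥ x)))⁻¹ : ℝ) * (star x ⬝ᵥ V *ᵥ z) := by
  rw [normalizeBy, star_smul, smul_dotProduct, smul_eq_mul, RCLike.star_def, RCLike.conj_ofReal]

theorem dotProduct_mulVec_normalizeBy (z : n → 𝕜) :
    z ⬝ᵥ V *ᵥ V.normalizeBy x
      = ((√(RCLike.re (star x ⬝ᵥ V *ᵥ x)))⁻¹ : ℝ) * (z ⬝ᵥ V *ᵥ x) := by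
  rw [normalizeBy, mulVec_smul, dotProduct_smul, smul_eq_mul]

theorem IsHermitian.star_normalizeBy_dotProduct_mulVec_self (hV : V.IsHermitian) (x : n → 𝕜) :
    star (V.normalizeBy x) ⬝ᵥ V *ᵥ x = √(RCLike.re (star x ⬝ᵥ V *ᵥ x)) := by
  rw [star_normalizeBy_dotProduct_mulVec]
  conv_lhs => arg 2; rw [← hV.ofReal_re_dotProduct_mulVec_self]
  rw [← RCLike.ofReal_mul, inv_mul_eq_div, Real.div_sqrt]

theorem PosDef.star_normalizeBy_dotProduct_mulVec_normalizeBy (hV : V.PosDef) (hx : x ≠ 0) :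
    star (V.normalizeBy x) ⬝ᵥ V *ᵥ V.normalizeBy x = 1 := by
  have hsqrt : √(RCLike.re (star x ⬝ᵥ V *ᵥ x)) ≠ 0 :=
    (Real.sqrt_pos.mpr (hV.re_dotProduct_pos hx)).ne'
  rw [dotProduct_mulVec_normalizeBy, hV.isHermitian.star_normalizeBy_dotProduct_mulVec_self,
    ← RCLike.ofReal_mul, inv_mul_cancel₀ hsqrt, RCLike.ofReal_one]

theorem PosDef.one_sub_log_le_sub_two_log (hV : V.PosDef) (hx : x ≠ 0) {v : n → 𝕜}
    (hv : star v ⬝ᵥ V *ᵥ x ≠ 0) :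
    1 - Real.log (RCLike.re (star x ⬝ᵥ V *ᵥ x))
      ≤ RCLike.re (star v ⬝ᵥ V *ᵥ v) - 2 * Real.log ‖star v ⬝ᵥ V *ᵥ x‖ :=
  Real.one_sub_log_le_sub_two_log (hV.re_dotProduct_pos hx) (norm_pos_iff.mpr hv)
    (hV.posSemidef.norm_dotProduct_mulVec_sq_le v x)

theorem PosDef.normalizeBy_minimizes (hV : V.PosDef) (hx : x ≠ 0) (δ : 𝕜) {v : n → 𝕜}
    (hv : δ * (star v ⬝ᵥ V *ᵥ x) ≠ 0) :
    RCLike.re (star (V.normalizeBy x) ⬝ᵥ V *ᵥ V.normalizeBy x)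
        - 2 * Real.log ‖δ * (star (V.normalizeBy x) ⬝ᵥ V *ᵥ x)‖
      ≤ RCLike.re (star v ⬝ᵥ V *ᵥ v) - 2 * Real.log ‖δ * (star v ⬝ᵥ V *ᵥ x)‖ := by
  obtain ⟨hδ, hvx⟩ := mul_ne_zero_iff.mp hv
  have hc := hV.re_dotProduct_pos hx
  rw [hV.star_normalizeBy_dotProduct_mulVec_normalizeBy hx,
    hV.isHermitian.star_normalizeBy_dotProduct_mulVec_self, norm_mul, norm_mul,
    RCLike.norm_ofReal, abs_of_pos (Real.sqrt_pos.mpr hc),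
    Real.log_mul (norm_ne_zero_iff.mpr hδ) (Real.sqrt_pos.mpr hc).ne',
    Real.log_mul (norm_ne_zero_iff.mpr hδ) (norm_ne_zero_iff.mpr hvx), Real.log_sqrt hc.le,
    RCLike.one_re]
  linarith [hV.one_sub_log_le_sub_two_log hx hvx]

end Matrix

/-- Iterative projection (IP) update for AuxIVA.  Fix all rows of the
demixing matrix except row `k` (given by the invertible matrix `Ŵ`).  The
function `w ↦ wᴴ V w − 2 log|det W(w)|`, where `W(w)` replaces row `k` of `Ŵ`
by `wᴴ`, is minimized (over `w` making `W(w)` invertible) by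
`w = γ (Ŵ V)⁻¹ e_k` with `γ = (e_kᴴ (Ŵ V)⁻ᴴ V (Ŵ V)⁻¹ e_k)^{−1/2}`;
the minimizer satisfies the HEAD equations `wᴴ V w = 1` and
`w_{k'}ᴴ V w = 0` for all `k' ≠ k`. -/
theorem auxiva_ip_update {M : ℕ}
    (V : Matrix (Fin M) (Fin M) ℂ) (hV : V.PosDef)
    (What : Matrix (Fin M) (Fin M) ℂ) (hWhat : IsUnit What)
    (k : Fin M) :
    let x : Fin M → ℂ := (What * V)⁻¹.mulVec (Pi.single k 1)
    let γ : ℝ := (Real.sqrt ((star x ⬝ᵥ V.mulVec x).re))⁻¹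
    let w : Fin M → ℂ := (γ : ℂ) • x
    let F : (Fin M → ℂ) → ℝ := fun v =>
      (star v ⬝ᵥ V.mulVec v).re
        - 2 * Real.log ‖(What.updateRow k (star v)).det‖
    (star w ⬝ᵥ V.mulVec w = 1) ∧
    (∀ k' ≠ k, What k' ⬝ᵥ V.mulVec w = 0) ∧
    (∀ v : Fin M → ℂ, IsUnit (What.updateRow k (star v)) → F w ≤ F v) := by
  intro x γ w F
  have hy : What *ᵥ (V *ᵥ x) = Pi.single k 1 := by
    have hWV : IsUnit (What * V).det := (isUnit_iff_isUnit_det _).mp (hWhat.mul hV.isUnit)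
    rw [mulVec_mulVec, mulVec_mulVec, mul_nonsing_inv _ hWV, one_mulVec]
  have hx : x ≠ 0 := by
    rintro hx
    simpa [hx] using congrFun hy k
  have hw : w = V.normalizeBy x := rfl
  have hdet (v : Fin M → ℂ) := det_updateRow_eq_det_mul_dotProduct hy (star v)
  refine ⟨hw ▸ hV.star_normalizeBy_dotProduct_mulVec_normalizeBy hx, fun k' hk' => ?_,
    fun v hv => ?_⟩
  · rw [hw, dotProduct_mulVec_normalizeBy, show What k' ⬝ᵥ V *ᵥ x = (What *ᵥ (V *ᵥ x)) k' from rfl,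
      hy, Pi.single_eq_of_ne hk', mul_zero]
  · simp only [F, hdet, hw]
    exact hV.normalizeBy_minimizes hx What.det (hdet v ▸ ((isUnit_iff_isUnit_det _).mp hv).ne_zero)
end
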